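/- Let G be a connected locally finite graph, let v ∈ V(G), and let k ≥ 1. Then there are only finitely many tight separations (Y, S, Z) of G of order k with v ∈ S. -/

import Mathlib

open SimpleGraph

/-- `H` is a minor of `G`, via branch sets. -/
def IsMinor {W V : Type*} (H : SimpleGraph W) (G : SimpleGraph V) : Prop :=
  ∃ B : W → Set V,
    (∀ w, (B w).Nonempty) ∧
    (∀ w, (G.induce (B w)).Connected) ∧
    (∀ w w', w ≠ w' → Disjoint (B w) (B w')) ∧
    (∀ ⦃w w'⦄, H.Adj w w' → ∃ u ∈ B w, ∃ v ∈ B w', G.Adj u v)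

/-- Planarity, via Wagner's characterization. -/
def IsPlanar {V : Type*} (G : SimpleGraph V) : Prop :=
  ¬ IsMinor (completeGraph (Fin 5)) G ∧
  ¬ IsMinor (completeBipartiteGraph (Fin 3) (Fin 3)) G

/-- `G` is isomorphic to a subgraph of `H`. -/
def EmbedsIn {V W : Type*} (G : SimpleGraph V) (H : SimpleGraph W) : Prop :=
  ∃ f : V → W, Function.Injective f ∧ ∀ ⦃u v⦄, G.Adj u v → H.Adj (f u) (f v)

/-- every vertex has at most `Δ` neighbours. -/
def MaxDegLE {V : Type*} (G : SimpleGraph V) (Δ : ℕ) : Prop :=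
  ∀ v, (G.neighborSet v).Finite ∧ (G.neighborSet v).ncard ≤ Δ

/-- the `k`-th power of a graph. -/
def pow {V : Type*} (G : SimpleGraph V) (k : ℕ) : SimpleGraph V where
  Adj u v := u ≠ v ∧ G.Reachable u v ∧ G.dist u v ≤ k
  symm := by
    constructor
    intro u v ⟨h1, h2, h3⟩
    exact ⟨h1.symm, h2.symm, by rwa [SimpleGraph.dist_comm]⟩
  loopless := by constructor; intro u h; exact h.1 rfl

/-- the `k`-blow-up of a graph. -/
def blowup {V : Type*} (G : SimpleGraph V) (k : ℕ) : SimpleGraph (V × Fin k) where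
  Adj a b := (a.1 = b.1 ∧ a.2 ≠ b.2) ∨ G.Adj a.1 b.1
  symm := by
    constructor
    rintro a b (⟨h1, h2⟩ | h)
    · exact Or.inl ⟨h1.symm, h2.symm⟩
    · exact Or.inr h.symm
  loopless := by
    constructor
    rintro a (⟨_, h2⟩ | h)
    · exact h2 rfl
    · exact G.loopless.irrefl _ h

/-- `ℓ`-planarity, combinatorially: there is a planar graph `P` (the planarization)
in which the vertices of `G` embed injectively and every edge of `G` is represented by a path
of length at most `ℓ+1` (i.e. subdivided at most `ℓ` times, once per crossing);
internal vertices of these paths are crossing vertices: they are not images of vertices of `G`,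
each lies on at most two of the paths, and every edge of `P` is used by at most one path. -/
def IsLPlanar {V : Type} (G : SimpleGraph V) (ℓ : ℕ) : Prop :=
  ∃ (W : Type) (P : SimpleGraph W) (f : V → W)
    (wk : G.edgeSet → Σ' (u v : V), P.Walk (f u) (f v)),
    IsPlanar P ∧ Function.Injective f ∧
    (∀ e : G.edgeSet, s((wk e).1, (wk e).2.1) = (e : Sym2 V)) ∧
    (∀ e : G.edgeSet, (wk e).2.2.IsPath ∧ (wk e).2.2.length ≤ ℓ + 1) ∧
    (∀ (e : G.edgeSet) (w : W), w ∈ (wk e).2.2.support → w ∈ Set.range f →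
        w = f (wk e).1 ∨ w = f (wk e).2.1) ∧
    (∀ (ep : Sym2 W) (e₁ e₂ : G.edgeSet),
        ep ∈ (wk e₁).2.2.edges → ep ∈ (wk e₂).2.2.edges → e₁ = e₂) ∧
    (∀ w : W, w ∉ Set.range f →
        ∃ a b : G.edgeSet, ∀ e : G.edgeSet, w ∈ (wk e).2.2.support → e = a ∨ e = b)

/-- quasi-isometric embedding conditions with constants `lam`, `eps` between graphs. -/
def GraphQIEmb {V W : Type*} (G : SimpleGraph V) (H : SimpleGraph W) (f : V → W)
    (lam eps : ℝ) : Prop :=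
  1 ≤ lam ∧ 0 ≤ eps ∧
  ∀ x y : V, (1 / lam) * (G.dist x y : ℝ) - eps ≤ (H.dist (f x) (f y) : ℝ) ∧
    (H.dist (f x) (f y) : ℝ) ≤ lam * (G.dist x y : ℝ) + eps

/-- quasi-isometry between graphs (shortest-path metrics): additionally the image is coarsely dense. -/
def GraphQI {V W : Type*} (G : SimpleGraph V) (H : SimpleGraph W) (f : V → W)
    (lam eps C : ℝ) : Prop :=
  GraphQIEmb G H f lam eps ∧ 0 ≤ C ∧ ∀ w : W, ∃ x : V, (H.dist w (f x) : ℝ) ≤ C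

def GraphQuasiIsometric {V W : Type*} (G : SimpleGraph V) (H : SimpleGraph W) : Prop :=
  ∃ (f : V → W) (lam eps C : ℝ), GraphQI G H f lam eps C

/-- tree-decomposition of `G` over the tree `Tr`. -/
structure TreeDecomp {V T : Type*} (G : SimpleGraph V) (Tr : SimpleGraph T) where
  bag : T → Set V
  covers : ∀ v : V, ∃ t, v ∈ bag t
  covers_edge : ∀ ⦃u v⦄, G.Adj u v → ∃ t, u ∈ bag t ∧ v ∈ bag t
  subtree : ∀ v : V, (Tr.induce {t | v ∈ bag t}).Connected

/-- the torso of a bag of a tree-decomposition. -/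
def torso {V T : Type*} {G : SimpleGraph V} {Tr : SimpleGraph T}
    (D : TreeDecomp G Tr) (t : T) : SimpleGraph (D.bag t) :=
  SimpleGraph.fromRel (fun u v =>
    G.Adj u.1 v.1 ∨ ∃ t', Tr.Adj t t' ∧ (u : V) ∈ D.bag t' ∧ (v : V) ∈ D.bag t')

/-- `G` has treewidth at most `w`. -/
def HasTWLE {V : Type*} (G : SimpleGraph V) (w : ℕ) : Prop :=
  ∃ (T : Type) (Tr : SimpleGraph T), Tr.IsTree ∧
    ∃ D : TreeDecomp G Tr, ∀ t, (D.bag t).Finite ∧ (D.bag t).ncard ≤ w + 1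

/-- separations -/
def IsSeparation {V : Type*} (G : SimpleGraph V) (Y S Z : Set V) : Prop :=
  Disjoint Y S ∧ Disjoint Y Z ∧ Disjoint S Z ∧ Y ∪ S ∪ Z = Set.univ ∧
  ∀ ⦃u v⦄, u ∈ Y → v ∈ Z → ¬ G.Adj u v

def IsTightSeparation {V : Type*} (G : SimpleGraph V) (Y S Z : Set V) : Prop :=
  ∃ Cy Cz : Set V, Cy.Nonempty ∧ Cz.Nonempty ∧ Cy ⊆ Y ∧ Cz ⊆ Z ∧
    (G.induce Cy).Connected ∧ (G.induce Cz).Connected ∧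
    {v | v ∉ Cy ∧ ∃ u ∈ Cy, G.Adj u v} = S ∧
    {v | v ∉ Cz ∧ ∃ u ∈ Cz, G.Adj u v} = S

/-- a layering of a graph. -/
def IsLayering {V : Type*} (G : SimpleGraph V) (L : ℕ → Set V) : Prop :=
  (∀ v, ∃! i, v ∈ L i) ∧
  ∀ ⦃u v⦄, G.Adj u v → ∀ i j, u ∈ L i → v ∈ L j → i ≤ j + 1 ∧ j ≤ i + 1

/-- an `n`-dimensional control function with dilation constant `c` for the graph metric of `G`
(the distance between vertices in different components being interpreted as infinite). -/
def GraphControl {V : Type*} (G : SimpleGraph V) (n : ℕ) (c : ℝ) : Prop :=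
  ∀ r : ℝ, 0 < r → ∃ U : Fin (n + 1) → Set (Set V),
    (∀ x : V, ∃ i, ∃ u ∈ U i, x ∈ u) ∧
    (∀ i, ∀ u ∈ U i, ∀ w ∈ U i, u ≠ w → ∀ x ∈ u, ∀ y ∈ w,
        ¬ G.Reachable x y ∨ r < (G.dist x y : ℝ)) ∧
    (∀ i, ∀ u ∈ U i, ∀ x ∈ u, ∀ y ∈ u, G.Reachable x y ∧ (G.dist x y : ℝ) ≤ c * r)

/-- the Assouad-Nagata dimension of the graph `G` is at most `n`. -/
def GraphANDimLE {V : Type*} (G : SimpleGraph V) (n : ℕ) : Prop :=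
  ∃ c : ℝ, 0 < c ∧ GraphControl G n c

/-- an `n`-dimensional control function with dilation constant `c` for a metric space. -/
def ANControl (X : Type*) [PseudoMetricSpace X] (n : ℕ) (c : ℝ) : Prop :=
  ∀ r : ℝ, 0 < r → ∃ U : Fin (n + 1) → Set (Set X),
    (∀ x : X, ∃ i, ∃ u ∈ U i, x ∈ u) ∧
    (∀ i, ∀ u ∈ U i, ∀ w ∈ U i, u ≠ w → ∀ x ∈ u, ∀ y ∈ w, r < dist x y) ∧
    (∀ i, ∀ u ∈ U i, ∀ x ∈ u, ∀ y ∈ u, dist x y ≤ c * r)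

/-- the Assouad-Nagata dimension of a metric space is at most `n`. -/
def ANDimLE (X : Type*) [PseudoMetricSpace X] (n : ℕ) : Prop :=
  ∃ c : ℝ, 0 < c ∧ ANControl X n c

/-- quasi-isometry conditions for metric spaces. -/
def MetricQI (X Y : Type*) [PseudoMetricSpace X] [PseudoMetricSpace Y]
    (f : X → Y) (lam eps C : ℝ) : Prop :=
  1 ≤ lam ∧ 0 ≤ eps ∧ 0 ≤ C ∧
  (∀ y : Y, ∃ x : X, dist y (f x) ≤ C) ∧
  ∀ x₁ x₂ : X, (1 / lam) * dist x₁ x₂ - eps ≤ dist (f x₁) (f x₂) ∧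
    dist (f x₁) (f x₂) ≤ lam * dist x₁ x₂ + eps

/-- attaching a set `P` of pendant vertices to `H`, the pendant `p` being attached at `g p`. -/
def attachPendants {V : Type*} (H : SimpleGraph V) (P : Type*) (g : P → V) :
    SimpleGraph (V ⊕ P) :=
  SimpleGraph.fromRel (fun a b =>
    match a, b with
    | .inl u, .inl v => H.Adj u v
    | .inl u, .inr p => g p = u
    | _, _ => False)

section TightAux

variable {V : Type} {G : SimpleGraph V}

/-- walk-based connectivity within a set. -/
def ConnIn (G : SimpleGraph V) (C : Set V) : Prop :=
  ∀ a ∈ C, ∀ b ∈ C, ∃ p : G.Walk a b, ∀ x ∈ p.support, x ∈ C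

/-- neighbourhood of `C` within the allowed set `A`. -/
def NbhdIn (G : SimpleGraph V) (A C : Set V) : Set V :=
  {x | x ∈ A ∧ x ∉ C ∧ ∃ u ∈ C, G.Adj u x}

/-- tight pair witnessing predicate relative to an allowed set `A`. -/
def TP (G : SimpleGraph V) (A S : Set V) : Prop :=
  ∃ C D : Set V, C ⊆ A ∧ D ⊆ A ∧ Disjoint C D ∧
    ConnIn G C ∧ ConnIn G D ∧ NbhdIn G A C = S ∧ NbhdIn G A D = S

lemma connIn_of_induce {C : Set V} (h : (G.induce C).Connected) : ConnIn G C := by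
  intro a ha b hb
  obtain ⟨q⟩ := h.preconnected ⟨a, ha⟩ ⟨b, hb⟩
  refine ⟨q.map (SimpleGraph.Embedding.induce C).toHom, ?_⟩
  intro x hx
  replace hx : x ∈ (q.map (SimpleGraph.Embedding.induce C).toHom).support := hx
  rw [SimpleGraph.Walk.support_map] at hx
  obtain ⟨y, _, rfl⟩ := List.mem_map.mp hx
  exact y.2

lemma tp_finite (hlf : ∀ v, (G.neighborSet v).Finite) :
    ∀ (k : ℕ) (A : Set V) (v : V), {S : Set V | TP G A S ∧ S.ncard = k + 1 ∧ v ∈ S}.Finite := by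
  intro k
  induction k with
  | zero =>
    intro A v
    apply Set.Finite.subset (Set.finite_singleton {v})
    rintro S ⟨-, hc, hv⟩
    obtain ⟨x, rfl⟩ := Set.ncard_eq_one.mp hc
    obtain rfl := Set.mem_singleton_iff.mp hv
    rfl
  | succ k ih =>
    intro A v
    classical
    -- partition according to neighbours a ∈ C, b ∈ D of v
    have key : ∀ a b : V, {S : Set V |
        (∃ C D : Set V, a ∈ C ∧ b ∈ D ∧ C ⊆ A ∧ D ⊆ A ∧ Disjoint C D ∧
          ConnIn G C ∧ ConnIn G D ∧ NbhdIn G A C = S ∧ NbhdIn G A D = S) ∧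
        S.ncard = k + 2 ∧ v ∈ S}.Finite := by
      intro a b
      set 𝒮 := {S : Set V |
        (∃ C D : Set V, a ∈ C ∧ b ∈ D ∧ C ⊆ A ∧ D ⊆ A ∧ Disjoint C D ∧
          ConnIn G C ∧ ConnIn G D ∧ NbhdIn G A C = S ∧ NbhdIn G A D = S) ∧
        S.ncard = k + 2 ∧ v ∈ S} with h𝒮
      by_cases hne : 𝒮.Nonempty
      · obtain ⟨S₀, ⟨C₀, D₀, haC₀, hbD₀, hCA₀, hDA₀, hdisj₀, hcC₀, hcD₀, hNC₀, hND₀⟩,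
          hcard₀, hv₀⟩ := hne
        have hS₀fin : S₀.Finite := by
          by_contra h
          rw [Set.Infinite.ncard h] at hcard₀
          omega
        have hdiffne : (S₀ \ {v}).Nonempty := by
          rw [← Set.ncard_pos (hS₀fin.diff), Set.ncard_diff_singleton_of_mem hv₀,
            hcard₀]
          omega
        obtain ⟨s₀, hs₀S, hs₀v⟩ := hdiffne
        have hs₀v : s₀ ≠ v := hs₀v
        -- s₀ ∈ NbhdIn A C₀ and in NbhdIn A D₀
        have hs₀C : s₀ ∈ NbhdIn G A C₀ := hNC₀ ▸ hs₀S
        have hs₀D : s₀ ∈ NbhdIn G A D₀ := hND₀ ▸ hs₀S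
        obtain ⟨hs₀A, hs₀nC, a₁, ha₁C, ha₁adj⟩ := hs₀C
        obtain ⟨-, hs₀nD, b₁, hb₁D, hb₁adj⟩ := hs₀D
        have hvC₀ : v ∉ C₀ := by
          have := hNC₀ ▸ hv₀; exact this.2.1
        have hvD₀ : v ∉ D₀ := by
          have := hND₀ ▸ hv₀; exact this.2.1
        obtain ⟨p₁, hp₁⟩ := hcC₀ a haC₀ a₁ ha₁C
        obtain ⟨p₂, hp₂⟩ := hcD₀ b₁ hb₁D b hbD₀
        set P : G.Walk a b := p₁.append (SimpleGraph.Walk.cons ha₁adj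
          (SimpleGraph.Walk.cons hb₁adj.symm p₂)) with hP
        have hPsupp : ∀ x ∈ P.support, x ∈ A ∧ x ≠ v := by
          intro x hx
          rw [hP, SimpleGraph.Walk.mem_support_append_iff] at hx
          rcases hx with hx | hx
          · exact ⟨hCA₀ (hp₁ x hx), fun h => hvC₀ (h ▸ hp₁ x hx)⟩
          · rw [SimpleGraph.Walk.support_cons] at hx
            rcases List.mem_cons.mp hx with he | hx
            · rw [he]; exact ⟨hCA₀ ha₁C, fun h => hvC₀ (h ▸ ha₁C)⟩
            · rw [SimpleGraph.Walk.support_cons] at hx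
              rcases List.mem_cons.mp hx with he | hx
              · rw [he]; exact ⟨hs₀A, hs₀v⟩
              · exact ⟨hDA₀ (hp₂ x hx), fun h => hvD₀ (h ▸ hp₂ x hx)⟩
        -- every S in 𝒮 contains a vertex of P other than v
        have hmem : ∀ S ∈ 𝒮, ∃ p ∈ P.support, p ∈ S ∧ p ≠ v := by
          rintro S ⟨⟨C, D, haC, hbD, hCA, hDA, hdisj, hcC, hcD, hNC, hND⟩, hcard, hv⟩
          have hbnC : b ∉ C := fun h => (Set.disjoint_left.mp hdisj h) hbD
          obtain ⟨d, hd, hdC, hdnC⟩ := P.exists_boundary_dart C haC hbnC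
          have hds : d.snd ∈ P.support := P.dart_snd_mem_support_of_mem_darts hd
          obtain ⟨hdA, hdv⟩ := hPsupp _ hds
          refine ⟨d.snd, hds, ?_, hdv⟩
          rw [← hNC]
          exact ⟨hdA, hdnC, d.fst, hdC, d.adj⟩
        -- conclude via pigeonhole over P.support and the inductive hypothesis
        have : 𝒮 ⊆ ⋃ p ∈ {x | x ∈ P.support}, {S ∈ 𝒮 | p ∈ S ∧ p ≠ v} := by
          intro S hS
          obtain ⟨p, hp, hpS, hpv⟩ := hmem S hS
          exact Set.mem_biUnion hp ⟨hS, hpS, hpv⟩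
        refine Set.Finite.subset (Set.Finite.biUnion (P.support.finite_toSet) ?_) this
        intro p _
        by_cases hpv : p = v
        · apply Set.Finite.subset (Set.finite_empty)
          intro S hS
          exact absurd hpv hS.2.2
        -- inject into the (k+1)-case with allowed set A \ {v}
        apply Set.Finite.of_finite_image (f := fun S => S \ {v})
        · apply Set.Finite.subset (ih (A \ {v}) p)
          rintro T ⟨S, ⟨hS𝒮, hpS, -⟩, rfl⟩
          rw [h𝒮] at hS𝒮
          obtain ⟨⟨C, D, haC, hbD, hCA, hDA, hdisj, hcC, hcD, hNC, hND⟩, hcard, hvS⟩ := hS𝒮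
          have hSfin : S.Finite := by
            by_contra h
            rw [Set.Infinite.ncard h] at hcard
            omega
          have hvC : v ∉ C := (hNC ▸ hvS).2.1
          have hvD : v ∉ D := (hND ▸ hvS).2.1
          have hNb : ∀ C' : Set V, v ∉ C' → NbhdIn G A C' = S →
              NbhdIn G (A \ {v}) C' = S \ {v} := by
            intro C' _ hN
            ext x
            simp only [NbhdIn, Set.mem_setOf_eq, Set.mem_diff, Set.mem_singleton_iff] at *
            constructor
            · rintro ⟨⟨hxA, hxv⟩, hxC, hu⟩
              exact ⟨hN ▸ ⟨hxA, hxC, hu⟩, hxv⟩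
            · rintro ⟨hxS, hxv⟩
              obtain ⟨hxA, hxC, hu⟩ := hN ▸ hxS
              exact ⟨⟨hxA, hxv⟩, hxC, hu⟩
          refine ⟨⟨C, D, ?_, ?_, hdisj, hcC, hcD, hNb C hvC hNC, hNb D hvD hND⟩, ?_, ?_⟩
          · exact Set.subset_diff.mpr ⟨hCA, Set.disjoint_singleton_right.mpr hvC⟩
          · exact Set.subset_diff.mpr ⟨hDA, Set.disjoint_singleton_right.mpr hvD⟩
          · rw [Set.ncard_diff_singleton_of_mem hvS, hcard]; omega
          · exact ⟨hpS, hpv⟩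
        · intro S₁ h₁ S₂ h₂ h
          have hv₁ : v ∈ S₁ := h₁.1.2.2
          have hv₂ : v ∈ S₂ := h₂.1.2.2
          have h' : S₁ \ {v} = S₂ \ {v} := h
          have : insert v (S₁ \ {v}) = insert v (S₂ \ {v}) := by rw [h']
          rwa [Set.insert_diff_singleton, Set.insert_diff_singleton,
            Set.insert_eq_of_mem hv₁, Set.insert_eq_of_mem hv₂] at this
      · rw [Set.not_nonempty_iff_eq_empty] at hne
        rw [hne]; exact Set.finite_empty
    -- partition the full set
    have hsub : {S : Set V | TP G A S ∧ S.ncard = k + 1 + 1 ∧ v ∈ S} ⊆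
        ⋃ a ∈ G.neighborSet v, ⋃ b ∈ G.neighborSet v, {S : Set V |
          (∃ C D : Set V, a ∈ C ∧ b ∈ D ∧ C ⊆ A ∧ D ⊆ A ∧ Disjoint C D ∧
            ConnIn G C ∧ ConnIn G D ∧ NbhdIn G A C = S ∧ NbhdIn G A D = S) ∧
          S.ncard = k + 2 ∧ v ∈ S} := by
      rintro S ⟨⟨C, D, hCA, hDA, hdisj, hcC, hcD, hNC, hND⟩, hcard, hv⟩
      obtain ⟨-, -, a, haC, haadj⟩ : v ∈ NbhdIn G A C := hNC ▸ hv
      obtain ⟨-, -, b, hbD, hbadj⟩ : v ∈ NbhdIn G A D := hND ▸ hv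
      refine Set.mem_biUnion (show a ∈ G.neighborSet v from haadj.symm) ?_
      refine Set.mem_biUnion (show b ∈ G.neighborSet v from hbadj.symm) ?_
      exact ⟨⟨C, D, haC, hbD, hCA, hDA, hdisj, hcC, hcD, hNC, hND⟩, hcard, hv⟩
    exact Set.Finite.subset ((hlf v).biUnion (fun a _ => (hlf v).biUnion (fun b _ => key a b)))
      hsub

/-- the neighbourhood of `S`. -/
def NSet (G : SimpleGraph V) (S : Set V) : Set V := {x | ∃ s ∈ S, G.Adj s x}

lemma first_hit {S : Set V} {u w : V} (W : G.Walk u w) :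
    u ∉ S → w ∈ S →
    ∃ x, (∃ P : G.Walk u x, ∀ y ∈ P.support, y ∉ S) ∧ ∃ s ∈ S, G.Adj x s := by
  induction W with
  | nil => intro hu hw; exact absurd hw hu
  | @cons c d e h W ih =>
    intro hu hw
    by_cases hd : d ∈ S
    · exact ⟨c, ⟨SimpleGraph.Walk.nil, by simpa using hu⟩, d, hd, h⟩
    · obtain ⟨x, ⟨P, hP⟩, hs⟩ := ih hd hw
      refine ⟨x, ⟨SimpleGraph.Walk.cons h P, ?_⟩, hs⟩
      intro y hy
      rw [SimpleGraph.Walk.support_cons] at hy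
      rcases List.mem_cons.mp hy with rfl | hy
      · exact hu
      · exact hP y hy

lemma walk_stays {Y S Z : Set V} (hsep : IsSeparation G Y S Z) {u w : V} (W : G.Walk u w) :
    (∀ y ∈ W.support, y ∉ S) → u ∈ Y → w ∈ Y := by
  induction W with
  | nil => intro _ hu; exact hu
  | @cons c d e h W ih =>
    intro hsup hu
    obtain ⟨dYS, dYZ, dSZ, hun, hnoadj⟩ := hsep
    have hdmem : d ∈ (SimpleGraph.Walk.cons h W).support := by
      rw [SimpleGraph.Walk.support_cons]
      exact List.mem_cons.mpr (Or.inr W.start_mem_support)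
    have hdS : d ∉ S := hsup d hdmem
    have hd : d ∈ Y ∪ S ∪ Z := hun ▸ Set.mem_univ d
    have hdY : d ∈ Y := by
      rcases hd with (hd | hd) | hd
      · exact hd
      · exact absurd hd hdS
      · exact absurd h (hnoadj hu hd)
    refine ih ?_ hdY
    intro y hy
    exact hsup y (by rw [SimpleGraph.Walk.support_cons]; exact List.mem_cons.mpr (Or.inr hy))

lemma Z_eq {Y S Z : Set V} (hsep : IsSeparation G Y S Z) : Z = (Y ∪ S)ᶜ := by
  obtain ⟨dYS, dYZ, dSZ, hun, -⟩ := hsep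
  ext x
  constructor
  · intro hx
    simp only [Set.mem_compl_iff, Set.mem_union]
    push_neg
    exact ⟨fun h => Set.disjoint_left.mp dYZ h hx, fun h => Set.disjoint_left.mp dSZ h hx⟩
  · intro hx
    have : x ∈ Y ∪ S ∪ Z := hun ▸ Set.mem_univ x
    rcases this with h | h
    · exact absurd h hx
    · exact h

lemma Y_subset (hG : G.Connected) {Y₁ Z₁ Y₂ Z₂ S : Set V}
    (h1 : IsSeparation G Y₁ S Z₁) (h2 : IsSeparation G Y₂ S Z₂) (hS : S.Nonempty)
    (hN : Y₁ ∩ NSet G S = Y₂ ∩ NSet G S) : Y₁ ⊆ Y₂ := by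
  intro u hu
  obtain ⟨s, hs⟩ := hS
  obtain ⟨W⟩ := hG.preconnected u s
  have huS : u ∉ S := fun h => Set.disjoint_left.mp h1.1 hu h
  obtain ⟨x, ⟨P, hP⟩, s', hs', hadj⟩ := first_hit W huS hs
  have hxY₁ : x ∈ Y₁ := walk_stays h1 P hP hu
  have hxN : x ∈ NSet G S := ⟨s', hs', hadj.symm⟩
  have hxY₂ : x ∈ Y₂ := by
    have hmem : x ∈ Y₁ ∩ NSet G S := ⟨hxY₁, hxN⟩
    rw [hN] at hmem
    exact hmem.1
  refine walk_stays h2 P.reverse ?_ hxY₂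
  intro y hy
  rw [SimpleGraph.Walk.support_reverse] at hy
  exact hP y (List.mem_reverse.mp hy)

end TightAux

/-- a connected locally finite graph has only finitely many tight separations of
order `k` whose separator contains a given vertex `v`. -/
theorem finitely_many_tight_separations {V : Type} (G : SimpleGraph V) (hG : G.Connected)
    (hlf : ∀ v, (G.neighborSet v).Finite) (v : V) (k : ℕ) (hk : 1 ≤ k) :
    {p : Set V × Set V × Set V | IsSeparation G p.1 p.2.1 p.2.2 ∧
      IsTightSeparation G p.1 p.2.1 p.2.2 ∧ p.2.1.ncard = k ∧ v ∈ p.2.1}.Finite := by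
  classical
  obtain ⟨k', rfl⟩ : ∃ k', k = k' + 1 := ⟨k - 1, (Nat.succ_pred_eq_of_pos hk).symm⟩
  set 𝒮 := {S : Set V | TP G Set.univ S ∧ S.ncard = k' + 1 ∧ v ∈ S} with h𝒮
  have h𝒮fin : 𝒮.Finite := tp_finite hlf k' Set.univ v
  have hSmem : ∀ p : Set V × Set V × Set V,
      IsSeparation G p.1 p.2.1 p.2.2 → IsTightSeparation G p.1 p.2.1 p.2.2 →
      p.2.1.ncard = k' + 1 → v ∈ p.2.1 → p.2.1 ∈ 𝒮 := by
    rintro ⟨Y, S, Z⟩ hsep ⟨Cy, Cz, hCyne, hCzne, hCyY, hCzZ, hcy, hcz, hNy, hNz⟩ hcard hv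
    refine ⟨⟨Cy, Cz, Set.subset_univ _, Set.subset_univ _,
      Disjoint.mono hCyY hCzZ hsep.2.1, connIn_of_induce hcy, connIn_of_induce hcz, ?_, ?_⟩,
      hcard, hv⟩
    · rw [← hNy]; ext x; simp [NbhdIn]
    · rw [← hNz]; ext x; simp [NbhdIn]
  have hNSfin : ∀ S ∈ 𝒮, (NSet G S).Finite := by
    rintro S ⟨-, hcard, -⟩
    have hSfin : S.Finite := by
      by_contra h
      rw [Set.Infinite.ncard h] at hcard
      omega
    have : NSet G S = ⋃ s ∈ S, G.neighborSet s := by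
      ext x; simp [NSet, SimpleGraph.neighborSet]
    rw [this]
    exact hSfin.biUnion fun s _ => hlf s
  apply Set.Finite.of_finite_image
    (f := fun p : Set V × Set V × Set V => (p.2.1, p.1 ∩ NSet G p.2.1))
  · apply Set.Finite.subset (Set.Finite.biUnion h𝒮fin
      (fun S hS => ((hNSfin S hS).finite_subsets.image fun T => ((S, T) : Set V × Set V))))
    rintro q ⟨p, ⟨hsep, htight, hcard, hv⟩, rfl⟩
    exact Set.mem_biUnion (hSmem p hsep htight hcard hv)
      ⟨p.1 ∩ NSet G p.2.1, Set.inter_subset_right, rfl⟩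
  · rintro p ⟨hsep₁, htight₁, hcard₁, hv₁⟩ q ⟨hsep₂, htight₂, hcard₂, hv₂⟩ heq
    simp only [Prod.mk.injEq] at heq
    obtain ⟨hS, hYN⟩ := heq
    rw [← hS] at hsep₂ hv₂ hYN
    have hSne : p.2.1.Nonempty := ⟨v, hv₁⟩
    have hY : p.1 = q.1 := by
      apply Set.Subset.antisymm
      · exact Y_subset hG hsep₁ hsep₂ hSne hYN
      · exact Y_subset hG hsep₂ hsep₁ hSne hYN.symm
    have hZ : p.2.2 = q.2.2 := by
      rw [Z_eq hsep₁, Z_eq hsep₂, hY]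
    exact Prod.ext hY (Prod.ext hS hZ)
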